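/- If a relation R sequentially commutes over S (i.e. S ∘ R ⊆ R ∘ S), then the reflexive-transitive closure of R ∪ S equals R* ∘ S*. -/

import Mathlib

open Relation
open scoped NNReal

abbrev PDist (A : Type) := List (ℝ≥0 × A)

namespace PPARS

variable {A X : Type}

/-- Total weight of a list distribution. -/
def weight (D : PDist A) : ℝ≥0 := (D.map Prod.fst).sum

/-- Scale every weight of a distribution by `α`. -/
def scale (α : ℝ≥0) (D : PDist A) : PDist A := D.map (fun pa => (α * pa.1, pa.2))

open Classical in
/-- Total weight that `D` assigns to the element `a`. -/
noncomputable def wt (D : PDist A) (a : A) : ℝ≥0 :=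
  (D.map (fun pa => if pa.2 = a then pa.1 else 0)).sum

/-- The Flip rule, closed under list contexts. -/
inductive FlipS : PDist A → PDist A → Prop
  | mk (E₁ E₂ : PDist A) (p q : ℝ≥0) (a b : A) :
      FlipS (E₁ ++ [(p,a),(q,b)] ++ E₂) (E₁ ++ [(q,b),(p,a)] ++ E₂)

/-- The Join rule, closed under list contexts. -/
inductive JoinS : PDist A → PDist A → Prop
  | mk (E₁ E₂ : PDist A) (p q : ℝ≥0) (a : A) :
      JoinS (E₁ ++ [(p,a),(q,a)] ++ E₂) (E₁ ++ [(p+q,a)] ++ E₂)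

/-- The Split rule, closed under list contexts. -/
inductive SplitS : PDist A → PDist A → Prop
  | mk (E₁ E₂ : PDist A) (p q : ℝ≥0) (a : A) :
      SplitS (E₁ ++ [(p+q,a)] ++ E₂) (E₁ ++ [(p,a),(q,a)] ++ E₂)

/-- One `∼`-step: congruence closure of Flip, Join and Split. -/
def SimStep (D E : PDist A) : Prop := FlipS D E ∨ JoinS D E ∨ SplitS D E

/-- One Flip-or-Join step. -/
def FJ (D E : PDist A) : Prop := FlipS D E ∨ JoinS D E

/-- Distribution equivalence `≈`. -/
def DEquiv : PDist A → PDist A → Prop := ReflTransGen SimStep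

/-- Parallel evolution `⇒_P` for a PARS relation `R`. -/
inductive PEvol (R : A → PDist A → Prop) : PDist A → PDist A → Prop
  | nil : PEvol R [] []
  | keep {ds ds' : PDist A} (p : ℝ≥0) (a : A) :
      PEvol R ds ds' → PEvol R ((p,a) :: ds) ((p,a) :: ds')
  | evolve {a : A} {D ds ds' : PDist A} (p : ℝ≥0) :
      R a D → PEvol R ds ds' → PEvol R ((p,a) :: ds) (scale p D ++ ds')

/-- Proper parallel evolution `⇒_P¹`: at least one element evolves. -/
inductive PEvol1 (R : A → PDist A → Prop) : PDist A → PDist A → Prop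
  | evolve {a : A} {D ds ds' : PDist A} (p : ℝ≥0) :
      R a D → PEvol R ds ds' → PEvol1 R ((p,a) :: ds) (scale p D ++ ds')
  | keep {ds ds' : PDist A} (p : ℝ≥0) (a : A) :
      PEvol1 R ds ds' → PEvol1 R ((p,a) :: ds) ((p,a) :: ds')

/-- The determinisation relation `↠ = ⇒_P ∪ ≈`. -/
def Red (R : A → PDist A → Prop) (D E : PDist A) : Prop := PEvol R D E ∨ DEquiv D E

/-- `R` defines a PARS: successor distributions are normalised. -/
def IsPARS (R : A → PDist A → Prop) : Prop := ∀ a D, R a D → weight D = 1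

/-- A terminal element has no successor distribution. -/
def Terminal (R : A → PDist A → Prop) (a : A) : Prop := ∀ D, ¬ R a D

/-- A terminal distribution contains only terminal elements. -/
def TerminalD (R : A → PDist A → Prop) (D : PDist A) : Prop := ∀ pa ∈ D, Terminal R pa.2

/-- Classical confluence of a relation. -/
def Confluent (r : X → X → Prop) : Prop :=
  ∀ a b c, ReflTransGen r a b → ReflTransGen r a c →
    ∃ d, ReflTransGen r b d ∧ ReflTransGen r c d

/-- Raw (finite) computation trees. -/
inductive CTree (A : Type) where
  | leaf (a : A)
  | node (a : A) (cs : List (ℝ≥0 × CTree A))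

def CTree.root : CTree A → A
  | .leaf a => a
  | .node a _ => a

/-- `IsTree R t a`: `t` is a computation tree of the PARS `R` with root `a`. -/
inductive IsTree (R : A → PDist A → Prop) : CTree A → A → Prop
  | leaf (a : A) : IsTree R (.leaf a) a
  | node (a : A) (cs : List (ℝ≥0 × CTree A)) :
      R a (cs.map fun x => (x.1, x.2.root)) →
      (∀ x ∈ cs, IsTree R x.2 x.2.root) →
      IsTree R (.node a cs) a

mutual
/-- Support of a computation tree. -/
def supp : CTree A → PDist A
  | .leaf a => [(1, a)]
  | .node _ cs => suppL cs
def suppL : List (ℝ≥0 × CTree A) → PDist A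
  | [] => []
  | (p, t) :: ts => scale p (supp t) ++ suppL ts
end

/-- A tree is maximal when all its leaves are terminal elements. -/
inductive MaximalT (R : A → PDist A → Prop) : CTree A → Prop
  | leaf (a : A) : Terminal R a → MaximalT R (.leaf a)
  | node (a : A) (cs : List (ℝ≥0 × CTree A)) :
      (∀ x ∈ cs, MaximalT R x.2) → MaximalT R (.node a cs)

end PPARS

namespace Relation

variable {X : Type*} {R S : X → X → Prop}

theorem reflTransGen_comp_le_of_comp_le (h : Comp S R ≤ Comp R S) :
    Comp (ReflTransGen S) R ≤ Comp R (ReflTransGen S) := by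
  rintro a c ⟨b, hab, hbc⟩
  induction hab using ReflTransGen.head_induction_on generalizing c with
  | refl => exact ⟨c, hbc, .refl⟩
  | head hS _ ih =>
    obtain ⟨d, hRd, hSd⟩ := ih c hbc
    obtain ⟨e, hRe, hSe⟩ := h _ _ ⟨_, hS, hRd⟩
    exact ⟨e, hRe, hSd.head hSe⟩

theorem reflTransGen_sup_le_comp_of_comp_le (h : Comp S R ≤ Comp R S) :
    ReflTransGen (R ⊔ S) ≤ Comp (ReflTransGen R) (ReflTransGen S) := by
  intro a c hac
  induction hac with
  | refl => exact ⟨a, .refl, .refl⟩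
  | tail _ hstep ih =>
    obtain ⟨m, hRm, hSm⟩ := ih
    rcases hstep with hR | hS
    · obtain ⟨d, hRd, hSd⟩ := reflTransGen_comp_le_of_comp_le h _ _ ⟨_, hSm, hR⟩
      exact ⟨d, hRm.tail hRd, hSd⟩
    · exact ⟨m, hRm, hSm.tail hS⟩

theorem comp_reflTransGen_le_reflTransGen_sup :
    Comp (ReflTransGen R) (ReflTransGen S) ≤ ReflTransGen (R ⊔ S) := by
  rintro a c ⟨b, hab, hbc⟩
  exact (ReflTransGen.mono le_sup_left _ _ hab).trans (ReflTransGen.mono le_sup_right _ _ hbc)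

end Relation

open Relation in
/-- If `R` sequentially commutes over `S` (`S ∘ R ⊆ R ∘ S`, diagrammatic order), then
`(R ∪ S)* = R* ∘ S*`. -/
theorem rtg_union_eq_comp_of_seq_comm {X : Type} (R S : X → X → Prop)
    (h : ∀ x y, Relation.Comp S R x y → Relation.Comp R S x y) :
    ∀ x y, ReflTransGen (fun a b => R a b ∨ S a b) x y ↔
      Relation.Comp (ReflTransGen R) (ReflTransGen S) x y :=
  fun x y ↦ ⟨reflTransGen_sup_le_comp_of_comp_le h x y, comp_reflTransGen_le_reflTransGen_sup x y⟩
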